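/- Let S be a semilattice and T an ideal of S. Let A be an S-graded C*-algebra acting on a Hilbert space F with A(σ) = {0} for σ ∉ T, and let B be an S-graded C*-algebra acting on E ⊗ F (E a Hilbert space) with B(τ) = K(E) ⊗ A(τ) for τ ∈ T. Then the operator matrix algebra C = [[B, E⊗A],[E*⊗A, A]] acting on (E⊗F) ⊕ F is an S-graded C*-algebra with components C(σ) = [[B(σ), E⊗A(σ)],[E*⊗A(σ), A(σ)]]. -/

import Mathlib

set_option maxHeartbeats 1000000

open ContinuousLinearMap Filter

variable {S : Type*} [SemilatticeInf S]
  {F G : Type*} [NormedAddCommGroup F] [InnerProductSpace ℂ F] [CompleteSpace F]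
  [NormedAddCommGroup G] [InnerProductSpace ℂ G] [CompleteSpace G]

/-- The operator matrix space `C(σ) = [[B(σ), N(σ)], [N(σ)*, A(σ)]]` acting on the
Hilbertian direct sum `G ⊕₂ F` (here `G` plays the role of `E ⊗ F` and
`N(σ)` the role of `E ⊗ A(σ) ⊆ L(F, E⊗F)`). -/
noncomputable def matC (A : S → Submodule ℂ (F →L[ℂ] F)) (N : S → Submodule ℂ (F →L[ℂ] G))
    (B : S → Submodule ℂ (G →L[ℂ] G)) (σ : S) :
    Set (WithLp 2 (G × F) →L[ℂ] WithLp 2 (G × F)) :=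
  {x | ∃ b ∈ B σ, ∃ n ∈ N σ, ∃ m ∈ N σ, ∃ a ∈ A σ, ∀ p : WithLp 2 (G × F),
    WithLp.equiv 2 (G × F) (x p) =
      (b (WithLp.equiv 2 (G × F) p).1 + n (WithLp.equiv 2 (G × F) p).2,
       (adjoint m) (WithLp.equiv 2 (G × F) p).1 + a (WithLp.equiv 2 (G × F) p).2)}

section Aux

variable {H K : Type*} [NormedAddCommGroup H] [InnerProductSpace ℂ H] [CompleteSpace H]
  [NormedAddCommGroup K] [InnerProductSpace ℂ K] [CompleteSpace K]

open ContinuousMapZero in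
lemma cfcn_mem
    (M : NonUnitalStarSubalgebra ℝ (H →L[ℂ] H)) (hM : IsClosed (M : Set (H →L[ℂ] H)))
    (a : H →L[ℂ] H) (ha : IsSelfAdjoint a) (haM : a ∈ M)
    (f : ℝ → ℝ) (hf : Continuous f) (h0 : f 0 = 0) : cfcₙ f a ∈ M := by
  have hcpt : CompactSpace (quasispectrum ℝ a) :=
    isCompact_iff_compactSpace.mp (NonUnitalContinuousFunctionalCalculus.isCompact_quasispectrum a)
  rw [cfcₙ_apply (f := f) (a := a)]
  set φ : C(quasispectrum ℝ a, ℝ)₀ →⋆ₙₐ[ℝ] (H →L[ℂ] H) := cfcₙHom (R := ℝ) ha with hφ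
  have hdense := ContinuousMapZero.adjoin_id_dense (quasispectrum ℝ a)
  have h1 : ∀ g, φ g ∈ closure
      (φ '' (NonUnitalStarAlgebra.adjoin ℝ {(ContinuousMapZero.id (quasispectrum ℝ a) : C(quasispectrum ℝ a, ℝ)₀)})) :=
    fun g => (cfcₙHom_continuous ha).range_subset_closure_image_dense hdense ⟨g, rfl⟩
  refine closure_minimal ?_ hM (h1 _)
  rintro - ⟨g, hg, rfl⟩
  have hle : (NonUnitalStarAlgebra.adjoin ℝ
      {(ContinuousMapZero.id (quasispectrum ℝ a) : C(quasispectrum ℝ a, ℝ)₀)}).map φ ≤ M := by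
    rw [NonUnitalStarAlgHom.map_adjoin_singleton]
    apply NonUnitalStarAlgebra.adjoin_le
    rw [Set.singleton_subset_iff, SetLike.mem_coe]
    rw [show φ (ContinuousMapZero.id (quasispectrum ℝ a)) = a from cfcₙHom_id ha]
    exact haM
  exact hle ⟨g, hg, rfl⟩

lemma approx_unit (M : NonUnitalStarSubalgebra ℝ (H →L[ℂ] H))
    (hM : IsClosed (M : Set (H →L[ℂ] H))) (x : H →L[ℂ] K)
    (hx : adjoint x ∘L x ∈ M) :
    ∃ u : ℕ → (H →L[ℂ] H), (∀ k, u k ∈ M ∧ IsSelfAdjoint (u k)) ∧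
      Tendsto (fun k => x ∘L u k) atTop (nhds x) := by
  classical
  set a : H →L[ℂ] H := adjoint x ∘L x with ha_def
  have ha : IsSelfAdjoint a := by
    rw [ContinuousLinearMap.isSelfAdjoint_iff']
    rw [ha_def, adjoint_comp, adjoint_adjoint]
  set f : ℕ → ℝ → ℝ := fun k t => min ((k+1) * |t|) 1 with hf_def
  have hfc : ∀ k, Continuous (f k) := fun k =>
    ((continuous_const.mul continuous_abs).min continuous_const)
  have hf0 : ∀ k, f k 0 = 0 := by intro k; simp [hf_def]
  set u : ℕ → (H →L[ℂ] H) := fun k => cfcₙ (f k) a with hu_def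
  have humem : ∀ k, u k ∈ M := fun k => cfcn_mem M hM a ha hx (f k) (hfc k) (hf0 k)
  have husa : ∀ k, IsSelfAdjoint (u k) := fun k => cfcₙ_predicate (f k) a
  refine ⟨u, fun k => ⟨humem k, husa k⟩, ?_⟩
  have key : ∀ k, ‖x ∘L u k - x‖ * ‖x ∘L u k - x‖ ≤ 1 / (k+1 : ℝ) := by
    intro k
    have hfa : ContinuousOn (f k) (quasispectrum ℝ a) := (hfc k).continuousOn
    have hida : ContinuousOn (fun t : ℝ => t) (quasispectrum ℝ a) := continuousOn_id
    have h2 : cfcₙ (fun t => f k t * t) a = u k * a := by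
      rw [cfcₙ_mul _ _ a hfa (hf0 k) hida rfl, cfcₙ_id' ℝ a]
    have h3 : cfcₙ (fun t => t * f k t) a = a * u k := by
      rw [cfcₙ_mul _ _ a hida rfl hfa (hf0 k), cfcₙ_id' ℝ a]
    have h1 : cfcₙ (fun t => f k t * t * f k t) a = u k * a * u k := by
      rw [cfcₙ_mul (fun t => f k t * t) (f k) a (hfa.mul hida) (by simp [hf0 k]) hfa (hf0 k), h2]
    have hexp : adjoint (x ∘L u k - x) ∘L (x ∘L u k - x)
        = cfcₙ (fun t => f k t * t * f k t - f k t * t - t * f k t + t) a := by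
      rw [cfcₙ_add _ _ a (((hfa.mul hida).mul hfa).sub ((hfa.mul hida).add (hida.mul hfa))
          |>.congr ?hcg) (by simp [hf0 k]) hida rfl]
      case hcg => intro t _; simp only [Pi.mul_apply, Pi.sub_apply, Pi.add_apply]; ring
      rw [cfcₙ_sub (fun t => f k t * t * f k t - f k t * t) (fun t => t * f k t) a ((hfa.mul hida).mul hfa |>.sub (hfa.mul hida)) (by simp [hf0 k])
        (hida.mul hfa) (by simp [hf0 k])]
      rw [cfcₙ_sub (fun t => f k t * t * f k t) (fun t => f k t * t) a ((hfa.mul hida).mul hfa) (by simp [hf0 k]) (hfa.mul hida)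
        (by simp [hf0 k])]
      rw [h1, h2, h3, cfcₙ_id' ℝ a]
      have hadj : adjoint (x ∘L u k - x) = u k ∘L adjoint x - adjoint x := by
        rw [map_sub, adjoint_comp, (husa k).adjoint_eq]
      rw [hadj]
      simp only [ContinuousLinearMap.comp_sub, ContinuousLinearMap.sub_comp,
        ContinuousLinearMap.mul_def, ha_def, ContinuousLinearMap.comp_assoc]
      abel
    have hbound : ∀ t ∈ quasispectrum ℝ a,
        ‖f k t * t * f k t - f k t * t - t * f k t + t‖ ≤ 1 / (k+1 : ℝ) := by
      intro t _
      have heq : f k t * t * f k t - f k t * t - t * f k t + t = t * (1 - f k t)^2 := by ring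
      rw [heq, Real.norm_eq_abs]
      rcases le_or_gt 1 ((k+1 : ℝ) * |t|) with h | h
      · have : f k t = 1 := min_eq_right h
        rw [this]
        norm_num
        positivity
      · have h0f : 0 ≤ f k t := le_min (by positivity) zero_le_one
        have h1f : f k t ≤ 1 := min_le_right _ _
        have htle : |t| ≤ 1 / (k+1 : ℝ) := by
          rw [le_div_iff₀ (by positivity)]
          nlinarith
        calc |t * (1 - f k t)^2| = |t| * (1 - f k t)^2 := by
              rw [abs_mul, abs_of_nonneg (sq_nonneg (1 - f k t))]
          _ ≤ |t| * 1 := by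
              have h4 : (1 - f k t)^2 ≤ 1 := by nlinarith
              exact mul_le_mul_of_nonneg_left h4 (abs_nonneg t)
          _ ≤ 1 / (k+1 : ℝ) := by simpa using htle
    calc ‖x ∘L u k - x‖ * ‖x ∘L u k - x‖ = ‖adjoint (x ∘L u k - x) ∘L (x ∘L u k - x)‖ :=
          (norm_adjoint_comp_self _).symm
      _ = ‖cfcₙ (fun t => f k t * t * f k t - f k t * t - t * f k t + t) a‖ := by rw [hexp]
      _ ≤ 1 / (k+1 : ℝ) := norm_cfcₙ_le hbound
  rw [← tendsto_sub_nhds_zero_iff]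
  have hb : ∀ k : ℕ, ‖x ∘L u k - x‖ ≤ Real.sqrt (1 / (k+1 : ℝ)) := by
    intro k
    rw [← Real.sqrt_mul_self (norm_nonneg (x ∘L u k - x))]
    exact Real.sqrt_le_sqrt (key k)
  have hsq : Tendsto (fun k : ℕ => Real.sqrt (1 / (k+1 : ℝ))) atTop (nhds 0) := by
    have h1 : Tendsto (fun k : ℕ => 1 / (k+1 : ℝ)) atTop (nhds 0) :=
      tendsto_one_div_add_atTop_nhds_zero_nat
    have h2 := (Real.continuous_sqrt.tendsto 0).comp h1
    rw [Real.sqrt_zero] at h2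
    exact h2
  have := squeeze_zero (fun k => norm_nonneg _) hb hsq
  exact tendsto_zero_iff_norm_tendsto_zero.mpr this

noncomputable def subalg (M : Submodule ℂ (H →L[ℂ] H))
    (hmul : ∀ x ∈ M, ∀ y ∈ M, x ∘L y ∈ M)
    (hstar : ∀ x ∈ M, adjoint x ∈ M) : NonUnitalStarSubalgebra ℝ (H →L[ℂ] H) where
  carrier := M
  add_mem' := fun hx hy => M.add_mem hx hy
  zero_mem' := M.zero_mem
  mul_mem' := fun {x y} hx hy => hmul x hx y hy
  smul_mem' := by
    intro r x hx
    rw [show r • x = (algebraMap ℝ ℂ r) • x from (algebraMap_smul ℂ r x).symm]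
    exact M.smul_mem _ hx
  star_mem' := by
    intro x hx
    rw [ContinuousLinearMap.star_eq_adjoint]
    exact hstar x hx

lemma eq_zero_of_adjoint_comp_self (x : H →L[ℂ] K) (h : adjoint x ∘L x = 0) : x = 0 := by
  have := norm_adjoint_comp_self x
  rw [h, norm_zero] at this
  have : ‖x‖ = 0 := by nlinarith [norm_nonneg x]
  exact norm_eq_zero.mp this

end Aux

section Blk

variable {F G : Type*} [NormedAddCommGroup F] [InnerProductSpace ℂ F] [CompleteSpace F]
  [NormedAddCommGroup G] [InnerProductSpace ℂ G] [CompleteSpace G]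

noncomputable def blk (b : G →L[ℂ] G) (n : F →L[ℂ] G) (m : F →L[ℂ] G) (a : F →L[ℂ] F) :
    WithLp 2 (G × F) →L[ℂ] WithLp 2 (G × F) :=
  ((WithLp.prodContinuousLinearEquiv 2 ℂ G F).symm : G × F →L[ℂ] WithLp 2 (G × F)) ∘L
    ((b ∘L (fst ℂ G F) + n ∘L (snd ℂ G F)).prod
      ((adjoint m) ∘L (fst ℂ G F) + a ∘L (snd ℂ G F))) ∘L
    ((WithLp.prodContinuousLinearEquiv 2 ℂ G F) : WithLp 2 (G × F) →L[ℂ] G × F)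

lemma blk_apply (b : G →L[ℂ] G) (n : F →L[ℂ] G) (m : F →L[ℂ] G) (a : F →L[ℂ] F)
    (p : WithLp 2 (G × F)) :
    WithLp.equiv 2 (G × F) (blk b n m a p) =
      (b (WithLp.equiv 2 (G × F) p).1 + n (WithLp.equiv 2 (G × F) p).2,
       (adjoint m) (WithLp.equiv 2 (G × F) p).1 + a (WithLp.equiv 2 (G × F) p).2) := rfl

lemma blk_comp (b b' : G →L[ℂ] G) (n n' m m' : F →L[ℂ] G) (a a' : F →L[ℂ] F) :
    blk b n m a ∘L blk b' n' m' a' =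
      blk (b ∘L b' + n ∘L adjoint m') (b ∘L n' + n ∘L a')
        (adjoint b' ∘L m + m' ∘L adjoint a) (adjoint m ∘L n' + a ∘L a') := by
  ext p
  apply (WithLp.equiv 2 (G × F)).injective
  rw [ContinuousLinearMap.comp_apply, blk_apply, blk_apply, blk_apply]
  have h1 : adjoint (adjoint b' ∘L m + m' ∘L adjoint a)
      = adjoint m ∘L b' + a ∘L adjoint m' := by
    rw [map_add, adjoint_comp, adjoint_comp, adjoint_adjoint, adjoint_adjoint]
  rw [h1]
  simp only [ContinuousLinearMap.add_apply, ContinuousLinearMap.comp_apply, map_add]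
  simp only [Prod.mk.injEq]
  constructor <;> abel

lemma blk_adjoint (b : G →L[ℂ] G) (n m : F →L[ℂ] G) (a : F →L[ℂ] F) :
    adjoint (blk b n m a) = blk (adjoint b) m n (adjoint a) := by
  symm
  rw [ContinuousLinearMap.eq_adjoint_iff]
  intro p q
  rw [WithLp.prod_inner_apply, WithLp.prod_inner_apply]
  have hp : ∀ (c : G →L[ℂ] G) (d e : F →L[ℂ] G) (f : F →L[ℂ] F) (r : WithLp 2 (G × F)),
      (blk c d e f r).ofLp.1 = c r.ofLp.1 + d r.ofLp.2 ∧ (blk c d e f r).ofLp.2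
        = (adjoint e) r.ofLp.1 + f r.ofLp.2 := fun c d e f r => ⟨rfl, rfl⟩
  rw [(hp _ _ _ _ p).1, (hp _ _ _ _ p).2, (hp _ _ _ _ q).1, (hp _ _ _ _ q).2]
  simp only [inner_add_left, inner_add_right, adjoint_inner_left, adjoint_inner_right,
    adjoint_adjoint]
  ring

lemma blk_add (b b' : G →L[ℂ] G) (n n' m m' : F →L[ℂ] G) (a a' : F →L[ℂ] F) :
    blk b n m a + blk b' n' m' a' = blk (b + b') (n + n') (m + m') (a + a') := by
  ext p
  apply (WithLp.equiv 2 (G × F)).injective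
  rw [ContinuousLinearMap.add_apply]
  simp only [show ∀ x y : WithLp 2 (G × F), WithLp.equiv 2 (G × F) (x + y) = WithLp.equiv 2 (G × F) x + WithLp.equiv 2 (G × F) y from fun _ _ => rfl, blk_apply, map_add, ContinuousLinearMap.add_apply,
    Prod.mk_add_mk, Prod.mk.injEq]
  constructor <;> abel

lemma blk_zero : blk (0 : G →L[ℂ] G) (0 : F →L[ℂ] G) 0 (0 : F →L[ℂ] F) = 0 := by
  ext p
  apply (WithLp.equiv 2 (G × F)).injective
  rw [blk_apply]
  simp

lemma blk_eq_zero {b : G →L[ℂ] G} {n m : F →L[ℂ] G} {a : F →L[ℂ] F}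
    (h : blk b n m a = 0) : b = 0 ∧ n = 0 ∧ m = 0 ∧ a = 0 := by
  have hfst : ∀ p : WithLp 2 (G × F), blk b n m a p = 0 := fun p => by rw [h]; rfl
  have hG : ∀ g : G, b g = 0 ∧ (adjoint m) g = 0 := by
    intro g
    have := congrArg (WithLp.equiv 2 (G × F)) (hfst ((WithLp.equiv 2 (G × F)).symm (g, 0)))
    rw [blk_apply] at this
    simp at this
    exact this
  have hF : ∀ f : F, n f = 0 ∧ a f = 0 := by
    intro f
    have := congrArg (WithLp.equiv 2 (G × F)) (hfst ((WithLp.equiv 2 (G × F)).symm (0, f)))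
    rw [blk_apply] at this
    simp at this
    exact this
  refine ⟨ContinuousLinearMap.ext fun g => (hG g).1, ContinuousLinearMap.ext fun f => (hF f).1,
    ?_, ContinuousLinearMap.ext fun f => (hF f).2⟩
  have : adjoint m = 0 := ContinuousLinearMap.ext fun g => (hG g).2
  calc m = adjoint (adjoint m) := (adjoint_adjoint m).symm
    _ = 0 := by rw [this]; simp

lemma blk_sum {ι : Type*} (t : Finset ι) (b : ι → (G →L[ℂ] G)) (n m : ι → (F →L[ℂ] G))
    (a : ι → (F →L[ℂ] F)) :
    ∑ i ∈ t, blk (b i) (n i) (m i) (a i)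
      = blk (∑ i ∈ t, b i) (∑ i ∈ t, n i) (∑ i ∈ t, m i) (∑ i ∈ t, a i) := by
  classical
  induction t using Finset.induction with
  | empty => simp [blk_zero]
  | insert _ _ h ih =>
    rw [Finset.sum_insert h, Finset.sum_insert h, Finset.sum_insert h, Finset.sum_insert h,
      Finset.sum_insert h, ih, blk_add]

lemma Nind (A : S' → Submodule ℂ (F →L[ℂ] F)) (N : S' → Submodule ℂ (F →L[ℂ] G))
    [SemilatticeInf S']
    (hNN : ∀ σ τ, ∀ m ∈ N σ, ∀ n ∈ N τ, (adjoint m) ∘L n ∈ A (σ ⊓ τ))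
    (hAind : ∀ t : Finset S', ∀ f : S' → (F →L[ℂ] F),
      (∀ σ ∈ t, f σ ∈ A σ) → (∑ σ ∈ t, f σ) = 0 → ∀ σ ∈ t, f σ = 0) :
    ∀ t : Finset S', ∀ f : S' → (F →L[ℂ] G),
      (∀ σ ∈ t, f σ ∈ N σ) → (∑ σ ∈ t, f σ) = 0 → ∀ σ ∈ t, f σ = 0 := by
  classical
  intro t
  induction t using Finset.strongInduction with
  | _ t ih =>
    intro f hmem hsum σ hσ
    have hne : t.Nonempty := ⟨σ, hσ⟩
    obtain ⟨τ, hτt, hτmax⟩ := t.exists_maximal hne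
    have hfτ : f τ = 0 := by
      set φ := adjoint (f τ) with hφ
      set g : S' → (F →L[ℂ] F) :=
        fun ρ => ∑ σ' ∈ t.filter (fun σ' => τ ⊓ σ' = ρ), φ ∘L f σ' with hg
      have hgmem : ∀ ρ ∈ t.image (fun σ' => τ ⊓ σ'), g ρ ∈ A ρ := by
        intro ρ _
        apply Submodule.sum_mem
        intro σ' hσ'
        rw [Finset.mem_filter] at hσ'
        have := hNN τ σ' (f τ) (hmem τ hτt) (f σ') (hmem σ' hσ'.1)
        rwa [hσ'.2] at this
      have hgsum : ∑ ρ ∈ t.image (fun σ' => τ ⊓ σ'), g ρ = 0 := by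
        show ∑ ρ ∈ t.image (fun σ' => τ ⊓ σ'),
          ∑ σ' ∈ t.filter (fun σ' => τ ⊓ σ' = ρ), φ ∘L f σ' = 0
        have hfib := Finset.sum_fiberwise_of_maps_to (g := fun σ' => τ ⊓ σ')
          (t := t.image (fun σ' => τ ⊓ σ'))
          (fun x hx => Finset.mem_image_of_mem _ hx) (fun σ' => φ ∘L f σ')
        rw [hfib]
        have : ∑ σ' ∈ t, φ ∘L f σ' = φ ∘L ∑ σ' ∈ t, f σ' :=
          (map_sum (ContinuousLinearMap.compL ℂ F G F φ) f t).symm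
        rw [this, hsum, ContinuousLinearMap.comp_zero]
      have hτmem : τ ∈ t.image (fun σ' => τ ⊓ σ') :=
        Finset.mem_image.mpr ⟨τ, hτt, inf_idem τ⟩
      have hgτ := hAind _ g hgmem hgsum τ hτmem
      have hfilter : t.filter (fun σ' => τ ⊓ σ' = τ) = {τ} := by
        apply Finset.eq_singleton_iff_unique_mem.mpr
        constructor
        · exact Finset.mem_filter.mpr ⟨hτt, inf_idem τ⟩
        · intro σ' hσ'
          rw [Finset.mem_filter] at hσ'
          have hle : τ ≤ σ' := inf_eq_left.mp hσ'.2
          by_contra hne'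
          exact hne' (le_antisymm (hτmax hσ'.1 hle) hle)
      rw [hg] at hgτ
      simp only [hfilter, Finset.sum_singleton] at hgτ
      exact eq_zero_of_adjoint_comp_self (f τ) hgτ
    by_cases hστ : σ = τ
    · rw [hστ]; exact hfτ
    · have herase : (t.erase τ) ⊂ t := Finset.erase_ssubset hτt
      have hsum' : ∑ σ' ∈ t.erase τ, f σ' = 0 := by
        have := Finset.sum_erase_add t f hτt
        rw [hfτ, add_zero] at this
        rw [this, hsum]
      exact ih (t.erase τ) herase f (fun σ' hσ' => hmem σ' (Finset.mem_of_mem_erase hσ'))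
        hsum' σ (Finset.mem_erase.mpr ⟨hστ, hσ⟩)

end Blk

/-- Concrete version of the "toy model" Proposition: let `T` be an ideal of the
semilattice `S`, let `A` be an `S`-graded C*-algebra of operators on `F` supported by
`T`, let `N(σ)` realize the graded Hilbert module `E ⊗ A(σ)` inside `L(F, E⊗F)`
(with `G` playing the role of `E ⊗ F`), and let `B` be an `S`-graded C*-algebra of
operators on `G` whose components for `τ ∈ T` are `K(E) ⊗ A(τ)`, i.e. the closed span
of `N(τ) N(τ)*`. Then the matrix spaces `C(σ) = [[B(σ), N(σ)], [N(σ)*, A(σ)]]` define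
an `S`-graded C*-algebra structure on `C`: each `C(σ)` is closed under adjoints, the
family is linearly independent, and `C(σ) C(τ) ⊆ C(σ ∧ τ)`. -/
theorem stmt19
    (T : Set S) (hT : ∀ σ τ : S, σ ≤ τ → τ ∈ T → σ ∈ T)
    (A : S → Submodule ℂ (F →L[ℂ] F)) (N : S → Submodule ℂ (F →L[ℂ] G))
    (B : S → Submodule ℂ (G →L[ℂ] G))
    (hAcl : ∀ σ, IsClosed (A σ : Set (F →L[ℂ] F)))
    (hAstar : ∀ σ, ∀ a ∈ A σ, adjoint a ∈ A σ)
    (hAmul : ∀ σ τ, ∀ a ∈ A σ, ∀ b ∈ A τ, a ∘L b ∈ A (σ ⊓ τ))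
    (hAind : ∀ t : Finset S, ∀ f : S → (F →L[ℂ] F),
      (∀ σ ∈ t, f σ ∈ A σ) → (∑ σ ∈ t, f σ) = 0 → ∀ σ ∈ t, f σ = 0)
    (hAT : ∀ σ, σ ∉ T → A σ = ⊥)
    (hNcl : ∀ σ, IsClosed (N σ : Set (F →L[ℂ] G)))
    (hNA : ∀ σ τ, ∀ n ∈ N σ, ∀ a ∈ A τ, n ∘L a ∈ N (σ ⊓ τ))
    (hNN : ∀ σ τ, ∀ m ∈ N σ, ∀ n ∈ N τ, (adjoint m) ∘L n ∈ A (σ ⊓ τ))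
    (hBcl : ∀ σ, IsClosed (B σ : Set (G →L[ℂ] G)))
    (hBstar : ∀ σ, ∀ b ∈ B σ, adjoint b ∈ B σ)
    (hBmul : ∀ σ τ, ∀ b ∈ B σ, ∀ b' ∈ B τ, b ∘L b' ∈ B (σ ⊓ τ))
    (hBind : ∀ t : Finset S, ∀ f : S → (G →L[ℂ] G),
      (∀ σ ∈ t, f σ ∈ B σ) → (∑ σ ∈ t, f σ) = 0 → ∀ σ ∈ t, f σ = 0)
    (hBT : ∀ τ ∈ T, (B τ : Set (G →L[ℂ] G)) =
      closure (↑(Submodule.span ℂ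
        {x : G →L[ℂ] G | ∃ m ∈ N τ, ∃ n ∈ N τ, x = m ∘L (adjoint n)}) :
        Set (G →L[ℂ] G))) :
    (∀ σ τ, ∀ x ∈ matC A N B σ, ∀ y ∈ matC A N B τ, x ∘L y ∈ matC A N B (σ ⊓ τ)) ∧
    (∀ σ, ∀ x ∈ matC A N B σ, adjoint x ∈ matC A N B σ) ∧
    (∀ t : Finset S, ∀ f : S → (WithLp 2 (G × F) →L[ℂ] WithLp 2 (G × F)),
      (∀ σ ∈ t, f σ ∈ matC A N B σ) → (∑ σ ∈ t, f σ) = 0 → ∀ σ ∈ t, f σ = 0) := by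
  classical
  -- membership characterization via `blk`
  have hmem_iff : ∀ σ (x : WithLp 2 (G × F) →L[ℂ] WithLp 2 (G × F)),
      x ∈ matC A N B σ ↔
        ∃ b ∈ B σ, ∃ n ∈ N σ, ∃ m ∈ N σ, ∃ a ∈ A σ, x = blk b n m a := by
    intro σ x
    constructor
    · rintro ⟨b, hb, n, hn, m, hm, a, ha, hx⟩
      exact ⟨b, hb, n, hn, m, hm, a, ha, ContinuousLinearMap.ext fun p =>
        (WithLp.equiv 2 (G × F)).injective (by rw [hx p, blk_apply])⟩
    · rintro ⟨b, hb, n, hn, m, hm, a, ha, rfl⟩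
      exact ⟨b, hb, n, hn, m, hm, a, ha, fun p => blk_apply b n m a p⟩
  -- N is supported on T
  have hNT : ∀ σ, σ ∉ T → ∀ n ∈ N σ, n = (0 : F →L[ℂ] G) := by
    intro σ hσ n hn
    apply eq_zero_of_adjoint_comp_self
    have h1 := hNN σ σ n hn n hn
    rw [inf_idem, hAT σ hσ] at h1
    simpa using h1
  have hAmul' : ∀ σ, ∀ x ∈ A σ, ∀ y ∈ A σ, x ∘L y ∈ A σ := by
    intro σ x hx y hy
    have := hAmul σ σ x hx y hy
    rwa [inf_idem] at this
  have hBmul' : ∀ σ, ∀ x ∈ B σ, ∀ y ∈ B σ, x ∘L y ∈ B σ := by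
    intro σ x hx y hy
    have := hBmul σ σ x hx y hy
    rwa [inf_idem] at this
  -- B(σ) N(τ) ⊆ N(σ ⊓ τ) when σ ∈ T
  have hBN1 : ∀ σ τ, σ ∈ T → ∀ b ∈ B σ, ∀ n' ∈ N τ, b ∘L n' ∈ N (σ ⊓ τ) := by
    intro σ τ hσ b hb n' hn'
    set R : (G →L[ℂ] G) →L[ℂ] (F →L[ℂ] G) := (ContinuousLinearMap.compL ℂ F G G).flip n' with hR
    have hmaps : ∀ y ∈ (Submodule.span ℂ
        {x : G →L[ℂ] G | ∃ m ∈ N σ, ∃ n ∈ N σ, x = m ∘L (adjoint n)} : Set (G →L[ℂ] G)),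
        R y ∈ (N (σ ⊓ τ) : Set (F →L[ℂ] G)) := by
      intro y hy
      have hsub : Submodule.span ℂ {x : G →L[ℂ] G | ∃ m ∈ N σ, ∃ n ∈ N σ, x = m ∘L (adjoint n)}
          ≤ (N (σ ⊓ τ)).comap (R : (G →L[ℂ] G) →ₗ[ℂ] (F →L[ℂ] G)) := by
        rw [Submodule.span_le]
        rintro x ⟨m, hm, n, hn, rfl⟩
        have h1 : adjoint n ∘L n' ∈ A (σ ⊓ τ) := hNN σ τ n hn n' hn'
        have h2 : m ∘L (adjoint n ∘L n') ∈ N (σ ⊓ (σ ⊓ τ)) := hNA σ (σ ⊓ τ) m hm _ h1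
        rw [show σ ⊓ (σ ⊓ τ) = σ ⊓ τ by rw [← inf_assoc, inf_idem]] at h2
        show R (m ∘L adjoint n) ∈ N (σ ⊓ τ)
        have hRx : R (m ∘L adjoint n) = m ∘L (adjoint n ∘L n') := by
          show (m ∘L adjoint n) ∘L n' = _
          rw [ContinuousLinearMap.comp_assoc]
        rw [hRx]
        exact h2
      exact hsub hy
    have hb' : b ∈ closure (↑(Submodule.span ℂ
        {x : G →L[ℂ] G | ∃ m ∈ N σ, ∃ n ∈ N σ, x = m ∘L (adjoint n)}) :
        Set (G →L[ℂ] G)) := by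
      rw [← hBT σ hσ]
      exact hb
    have := map_mem_closure R.continuous hb' hmaps
    rw [(hNcl (σ ⊓ τ)).closure_eq] at this
    exact this
  -- B(σ) N(τ) ⊆ N(σ ⊓ τ) in general
  have hBN : ∀ σ τ, ∀ b ∈ B σ, ∀ n' ∈ N τ, b ∘L n' ∈ N (σ ⊓ τ) := by
    intro σ τ b hb n' hn'
    by_cases hτ : τ ∈ T
    swap
    · rw [hNT τ hτ n' hn', ContinuousLinearMap.comp_zero]
      exact Submodule.zero_mem _
    by_cases hσ : σ ∈ T
    · exact hBN1 σ τ hσ b hb n' hn'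
    -- approximate n' from the left by elements of B τ
    have hmemBτ : adjoint (adjoint n') ∘L (adjoint n') ∈ subalg (B τ) (hBmul' τ) (hBstar τ) := by
      show adjoint (adjoint n') ∘L (adjoint n') ∈ (B τ : Set (G →L[ℂ] G))
      rw [adjoint_adjoint, hBT τ hτ]
      exact subset_closure (Submodule.subset_span ⟨n', hn', n', hn', rfl⟩)
    obtain ⟨u, hu, hconv⟩ := approx_unit (subalg (B τ) (hBmul' τ) (hBstar τ)) (hBcl τ)
      (adjoint n') hmemBτ
    have hcontadj : Continuous (fun y : G →L[ℂ] F => adjoint y) :=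
      (ContinuousLinearMap.adjoint : (G →L[ℂ] F) ≃ₗᵢ⋆[ℂ] (F →L[ℂ] G)).continuous
    have h3 : Tendsto (fun k => u k ∘L n') atTop (nhds n') := by
      have h2 : Tendsto (fun k => adjoint (adjoint n' ∘L u k)) atTop
          (nhds (adjoint (adjoint n'))) := (hcontadj.tendsto _).comp hconv
      rw [adjoint_adjoint] at h2
      refine h2.congr fun k => ?_
      rw [adjoint_comp, adjoint_adjoint, (hu k).2.adjoint_eq]
    have h4 : Tendsto (fun k => b ∘L (u k ∘L n')) atTop (nhds (b ∘L n')) :=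
      ((ContinuousLinearMap.compL ℂ F G G b).continuous.tendsto _).comp h3
    have hterm : ∀ k, b ∘L (u k ∘L n') ∈ (N (σ ⊓ τ) : Set (F →L[ℂ] G)) := by
      intro k
      have hbu : b ∘L u k ∈ B (σ ⊓ τ) := hBmul σ τ b hb (u k) (hu k).1
      have := hBN1 (σ ⊓ τ) τ (hT (σ ⊓ τ) τ inf_le_right hτ) (b ∘L u k) hbu n' hn'
      rw [show (σ ⊓ τ) ⊓ τ = σ ⊓ τ by rw [inf_assoc, inf_idem]] at this
      rwa [ContinuousLinearMap.comp_assoc] at this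
    exact (hNcl (σ ⊓ τ)).mem_of_tendsto h4 (Filter.Eventually.of_forall hterm)
  -- N(ρ) N(τ)* ⊆ B(ρ) for ρ ≤ τ, ρ ∈ T
  have hNN1 : ∀ ρ τ, ρ ∈ T → ρ ≤ τ → ∀ p ∈ N ρ, ∀ m' ∈ N τ,
      p ∘L adjoint m' ∈ B ρ := by
    intro ρ τ hρ hρτ p hp m' hm'
    have hmemAρ : adjoint p ∘L p ∈ subalg (A ρ) (hAmul' ρ) (hAstar ρ) := by
      show adjoint p ∘L p ∈ (A ρ : Set (F →L[ℂ] F))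
      have := hNN ρ ρ p hp p hp
      rwa [inf_idem] at this
    obtain ⟨v, hv, hconv⟩ := approx_unit (subalg (A ρ) (hAmul' ρ) (hAstar ρ)) (hAcl ρ) p hmemAρ
    have h4 : Tendsto (fun j => (p ∘L v j) ∘L adjoint m') atTop (nhds (p ∘L adjoint m')) :=
      (((ContinuousLinearMap.compL ℂ G F G).flip (adjoint m')).continuous.tendsto _).comp hconv
    have hterm : ∀ j, (p ∘L v j) ∘L adjoint m' ∈ (B ρ : Set (G →L[ℂ] G)) := by
      intro j
      have hmv : m' ∘L v j ∈ N ρ := by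
        have := hNA τ ρ m' hm' (v j) (hv j).1
        rwa [inf_eq_right.mpr hρτ] at this
      have hadj : (p ∘L v j) ∘L adjoint m' = p ∘L adjoint (m' ∘L v j) := by
        rw [adjoint_comp, (hv j).2.adjoint_eq, ContinuousLinearMap.comp_assoc]
      rw [hadj, hBT ρ hρ]
      exact subset_closure (Submodule.subset_span ⟨p, hp, m' ∘L v j, hmv, rfl⟩)
    exact (hBcl ρ).mem_of_tendsto h4 (Filter.Eventually.of_forall hterm)
  -- N(σ) N(τ)* ⊆ B(σ ⊓ τ)
  have hNNstar : ∀ σ τ, ∀ n ∈ N σ, ∀ m' ∈ N τ, n ∘L adjoint m' ∈ B (σ ⊓ τ) := by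
    intro σ τ n hn m' hm'
    by_cases hσ : σ ∈ T
    swap
    · rw [hNT σ hσ n hn, ContinuousLinearMap.zero_comp]
      exact Submodule.zero_mem _
    by_cases hτ : τ ∈ T
    swap
    · rw [hNT τ hτ m' hm']
      rw [show adjoint (0 : F →L[ℂ] G) = 0 by simp, ContinuousLinearMap.comp_zero]
      exact Submodule.zero_mem _
    have hρ : σ ⊓ τ ∈ T := hT (σ ⊓ τ) τ inf_le_right hτ
    have hmemAτ : adjoint m' ∘L m' ∈ subalg (A τ) (hAmul' τ) (hAstar τ) := by
      show adjoint m' ∘L m' ∈ (A τ : Set (F →L[ℂ] F))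
      have := hNN τ τ m' hm' m' hm'
      rwa [inf_idem] at this
    obtain ⟨u, hu, hconv⟩ := approx_unit (subalg (A τ) (hAmul' τ) (hAstar τ)) (hAcl τ) m' hmemAτ
    have hcontadj : Continuous (fun y : F →L[ℂ] G => adjoint y) :=
      (ContinuousLinearMap.adjoint : (F →L[ℂ] G) ≃ₗᵢ⋆[ℂ] (G →L[ℂ] F)).continuous
    have h2 : Tendsto (fun k => adjoint (m' ∘L u k)) atTop (nhds (adjoint m')) :=
      (hcontadj.tendsto _).comp hconv
    have h4 : Tendsto (fun k => n ∘L adjoint (m' ∘L u k)) atTop (nhds (n ∘L adjoint m')) :=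
      ((ContinuousLinearMap.compL ℂ G F G n).continuous.tendsto _).comp h2
    have hterm : ∀ k, n ∘L adjoint (m' ∘L u k) ∈ (B (σ ⊓ τ) : Set (G →L[ℂ] G)) := by
      intro k
      have hnu : n ∘L u k ∈ N (σ ⊓ τ) := hNA σ τ n hn (u k) (hu k).1
      have heq : n ∘L adjoint (m' ∘L u k) = (n ∘L u k) ∘L adjoint m' := by
        rw [adjoint_comp, (hu k).2.adjoint_eq, ContinuousLinearMap.comp_assoc]
      rw [heq]
      exact hNN1 (σ ⊓ τ) τ hρ inf_le_right (n ∘L u k) hnu m' hm'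
    exact (hBcl (σ ⊓ τ)).mem_of_tendsto h4 (Filter.Eventually.of_forall hterm)
  refine ⟨?_, ?_, ?_⟩
  · -- multiplication
    intro σ τ x hx y hy
    obtain ⟨b, hb, n, hn, m, hm, a, ha, rfl⟩ := (hmem_iff σ x).mp hx
    obtain ⟨b', hb', n', hn', m', hm', a', ha', rfl⟩ := (hmem_iff τ y).mp hy
    refine (hmem_iff _ _).mpr
      ⟨b ∘L b' + n ∘L adjoint m', ?_, b ∘L n' + n ∘L a', ?_,
       adjoint b' ∘L m + m' ∘L adjoint a, ?_, adjoint m ∘L n' + a ∘L a', ?_,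
       blk_comp b b' n n' m m' a a'⟩
    · exact Submodule.add_mem _ (hBmul σ τ b hb b' hb') (hNNstar σ τ n hn m' hm')
    · exact Submodule.add_mem _ (hBN σ τ b hb n' hn') (hNA σ τ n hn a' ha')
    · have h1 : adjoint b' ∘L m ∈ N (τ ⊓ σ) := hBN τ σ (adjoint b') (hBstar τ b' hb') m hm
      have h2 : m' ∘L adjoint a ∈ N (τ ⊓ σ) := hNA τ σ m' hm' (adjoint a) (hAstar σ a ha)
      rw [inf_comm τ σ] at h1 h2
      exact Submodule.add_mem _ h1 h2
    · exact Submodule.add_mem _ (hNN σ τ m hm n' hn') (hAmul σ τ a ha a' ha')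
  · -- adjoints
    intro σ x hx
    obtain ⟨b, hb, n, hn, m, hm, a, ha, rfl⟩ := (hmem_iff σ x).mp hx
    exact (hmem_iff _ _).mpr
      ⟨adjoint b, hBstar σ b hb, m, hm, n, hn, adjoint a, hAstar σ a ha, blk_adjoint b n m a⟩
  · -- linear independence
    intro t f hf hsum σ hσ
    have hex : ∀ σ', ∃ b, ∃ n, ∃ m, ∃ a, b ∈ B σ' ∧ n ∈ N σ' ∧ m ∈ N σ' ∧ a ∈ A σ' ∧
        (σ' ∈ t → f σ' = blk b n m a) := by
      intro σ'
      by_cases h : σ' ∈ t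
      · obtain ⟨b, hb, n, hn, m, hm, a, ha, heq⟩ := (hmem_iff σ' (f σ')).mp (hf σ' h)
        exact ⟨b, n, m, a, hb, hn, hm, ha, fun _ => heq⟩
      · exact ⟨0, 0, 0, 0, Submodule.zero_mem _, Submodule.zero_mem _, Submodule.zero_mem _,
          Submodule.zero_mem _, fun h' => absurd h' h⟩
    choose bb nn mm aa hbb hnn hmm haa hrep using hex
    have hblksum : blk (∑ σ' ∈ t, bb σ') (∑ σ' ∈ t, nn σ') (∑ σ' ∈ t, mm σ')
        (∑ σ' ∈ t, aa σ') = 0 := by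
      rw [← blk_sum]
      rw [← Finset.sum_congr rfl (fun σ' h => hrep σ' h)]
      exact hsum
    obtain ⟨hb0, hn0, hm0, ha0⟩ := blk_eq_zero hblksum
    have hbz := hBind t bb (fun σ' h => hbb σ') hb0 σ hσ
    have haz := hAind t aa (fun σ' h => haa σ') ha0 σ hσ
    have hnz := Nind A N hNN hAind t nn (fun σ' h => hnn σ') hn0 σ hσ
    have hmz := Nind A N hNN hAind t mm (fun σ' h => hmm σ') hm0 σ hσ
    rw [hrep σ hσ, hbz, hnz, hmz, haz, blk_zero]
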